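/- On a probability space, in the multilayer e-filter setting with null structure, fix c > 0, levels γ^(1),…,γ^(M) ∈ (0,1) and α^(1),…,α^(M) ∈ (0,1), an integer R ≥ 1, and a constant c_kn > 0. For each m ∈ [M] and r ∈ [R], let (T_{g,r}^(m))_{g∈[G^(m)]} be real random statistics and t̃_r^(m) > 0 a random threshold, and assume the knockoff supremum bound E[sup_{t>0} #{g ∈ H0^(m) : T_{g,r}^(m) ≥ t} / (1 + #{g ∈ H0^(m) : T_{g,r}^(m) ≤ −t})] ≤ c_kn. Define V̂_r^(m) = c·(1 + #{g ∈ [G^(m)] : T_{g,r}^(m) ≤ −t̃_r^(m)}) and the generalized e-values e_{g,r}^(m) = G^(m)·1{T_{g,r}^(m) ≥ t̃_r^(m)}/max(V̂_r^(m), γ^(m)). For fixed weights w_r^(m) ≥ 0 with Σ_{r=1}^R w_r^(m) = 1, let ē_g^(m) = Σ_{r=1}^R w_r^(m) e_{g,r}^(m), and let S be the output of the generalized e-filter applied to (ē_g^(m)) at levels α^(1),…,α^(M). Then FDR^(m) ≤ (c_kn/c)·α^(m) for every m ∈ [M]. -/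

import Mathlib

/-!
Deterministically, the generalized e-filter obeys the e-BH bound
`FDP^(m) ≤ (α^(m) / G^(m)) · ∑_{g ∈ H0^(m)} e_g^(m)`: every selected group has `e_g^(m) ≥ t̂^(m)`,
and `t̂` is itself admissible, so `t̂^(m) · (|S^(m)| ∨ 1) ≥ G^(m) / α^(m)`.
For the knockoff e-values, `V̂_r^(m)` counts all negative statistics, hence at least the null ones,
so the null part of `∑_g e_{g,r}^(m)` is at most `G^(m)/c` times the knockoff ratio at `t̃_r^(m)`,
which is dominated by its supremum over `t > 0`. Averaging over `r` and taking expectations,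
the supremum bound gives `FDR^(m) ≤ α^(m) · (c_kn / c) · ∑_r w_r^(m)`.
-/

open scoped ENNReal
open Filter MeasureTheory

namespace MultilayerEFilter

variable {N M : ℕ} {G : Fin M → ℕ}

/-- Candidate selection set `S(t) = {j : e_{h(m,j)}^(m) ≥ t^(m) for all m}`. -/
noncomputable def sel (h : (m : Fin M) → Fin N → Fin (G m))
    (e : (m : Fin M) → Fin (G m) → ℝ≥0∞) (t : Fin M → ℝ≥0∞) : Finset (Fin N) :=
  Finset.univ.filter fun j => ∀ m, t m ≤ e m (h m j)

/-- Induced group selection `S^(m) = {g : A_g^(m) ∩ S ≠ ∅}`. -/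
noncomputable def selGrp (A : (m : Fin M) → Fin (G m) → Finset (Fin N))
    (S : Finset (Fin N)) (m : Fin M) : Finset (Fin (G m)) :=
  Finset.univ.filter fun g => ∃ j ∈ A m g, j ∈ S

/-- Estimated FDP at layer `m`: `(G^(m)/t^(m)) / (|S^(m)(t)| ∨ 1)` (with `G/∞ = 0`). -/
noncomputable def FDPhat (A : (m : Fin M) → Fin (G m) → Finset (Fin N))
    (h : (m : Fin M) → Fin N → Fin (G m))
    (e : (m : Fin M) → Fin (G m) → ℝ≥0∞) (t : Fin M → ℝ≥0∞) (m : Fin M) : ℝ≥0∞ :=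
  ((G m : ℝ≥0∞) / t m) / ((max (selGrp A (sel h e t) m).card 1 : ℕ) : ℝ≥0∞)

/-- Admissible threshold vectors. -/
noncomputable def admissible (A : (m : Fin M) → Fin (G m) → Finset (Fin N))
    (h : (m : Fin M) → Fin N → Fin (G m))
    (e : (m : Fin M) → Fin (G m) → ℝ≥0∞) (α : Fin M → ℝ) : Set (Fin M → ℝ≥0∞) :=
  {t | (∀ m, 1 ≤ t m) ∧ ∀ m, FDPhat A h e t m ≤ ENNReal.ofReal (α m)}

/-- Threshold of the generalized e-filter: coordinatewise minimum over admissible vectors. -/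
noncomputable def filterThreshold (A : (m : Fin M) → Fin (G m) → Finset (Fin N))
    (h : (m : Fin M) → Fin N → Fin (G m))
    (e : (m : Fin M) → Fin (G m) → ℝ≥0∞) (α : Fin M → ℝ) (m : Fin M) : ℝ≥0∞ :=
  sInf {s | ∃ t ∈ admissible A h e α, t m = s}

/-- Output of the generalized e-filter. -/
noncomputable def output (A : (m : Fin M) → Fin (G m) → Finset (Fin N))
    (h : (m : Fin M) → Fin N → Fin (G m))
    (e : (m : Fin M) → Fin (G m) → ℝ≥0∞) (α : Fin M → ℝ) : Finset (Fin N) :=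
  sel h e (filterThreshold A h e α)

/-- Null groups at layer `m`: groups entirely contained in the null feature set. -/
def nullGrp (A : (m : Fin M) → Fin (G m) → Finset (Fin N))
    (H0 : Finset (Fin N)) (m : Fin M) : Finset (Fin (G m)) :=
  Finset.univ.filter fun g => A m g ⊆ H0

/-- Layer-`m` false discovery proportion of a selected feature set. -/
noncomputable def FDP (A : (m : Fin M) → Fin (G m) → Finset (Fin N))
    (H0 : Finset (Fin N)) (S : Finset (Fin N)) (m : Fin M) : ℝ≥0∞ :=
  ((selGrp A S m ∩ nullGrp A H0 m).card : ℝ≥0∞) /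
    ((max (selGrp A S m).card 1 : ℕ) : ℝ≥0∞)

end MultilayerEFilter

namespace MultilayerEFilter

section EFilter

variable {N M : ℕ} {G : Fin M → ℕ} (A : (m : Fin M) → Fin (G m) → Finset (Fin N))
  (h : (m : Fin M) → Fin N → Fin (G m)) (e : (m : Fin M) → Fin (G m) → ℝ≥0∞)

lemma sel_antitone {t t' : Fin M → ℝ≥0∞} (htt : t ≤ t') : sel h e t' ⊆ sel h e t := by
  intro j hj
  simp only [sel, Finset.mem_filter, Finset.mem_univ, true_and] at hj ⊢
  exact fun m => (htt m).trans (hj m)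

lemma selGrp_mono {S S' : Finset (Fin N)} (hS : S ⊆ S') (m : Fin M) :
    selGrp A S m ⊆ selGrp A S' m := by
  intro g hg
  simp only [selGrp, Finset.mem_filter, Finset.mem_univ, true_and] at hg ⊢
  obtain ⟨j, hjA, hjS⟩ := hg
  exact ⟨j, hjA, hS hjS⟩

lemma le_of_mem_selGrp_sel
    (hdisj : ∀ m, ∀ g₁ g₂ : Fin (G m), g₁ ≠ g₂ → Disjoint (A m g₁) (A m g₂))
    (hmem : ∀ m j, j ∈ A m (h m j)) {t : Fin M → ℝ≥0∞} {m : Fin M} {g : Fin (G m)}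
    (hg : g ∈ selGrp A (sel h e t) m) : t m ≤ e m g := by
  simp only [selGrp, sel, Finset.mem_filter, Finset.mem_univ, true_and] at hg
  obtain ⟨j, hjA, hjS⟩ := hg
  obtain rfl : h m j = g := by
    by_contra hne
    exact Finset.disjoint_left.mp (hdisj m _ _ hne) (hmem m j) hjA
  exact hjS m

lemma filterThreshold_le {α : Fin M → ℝ} {t : Fin M → ℝ≥0∞} (ht : t ∈ admissible A h e α) :
    filterThreshold A h e α ≤ t :=
  fun _ => sInf_le ⟨t, ht, rfl⟩

lemma natCast_le_mul_filterThreshold {α : Fin M → ℝ} {m : Fin M} (hα : 0 < α m) :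
    (G m : ℝ≥0∞) ≤ ENNReal.ofReal (α m) *
      ((max (selGrp A (output A h e α) m).card 1 : ℕ) : ℝ≥0∞) * filterThreshold A h e α m := by
  set a := ENNReal.ofReal (α m) * ((max (selGrp A (output A h e α) m).card 1 : ℕ) : ℝ≥0∞)
  have ha0 : a ≠ 0 := mul_ne_zero (ENNReal.ofReal_pos.2 hα).ne' (by simp)
  have hatop : a ≠ ⊤ := ENNReal.mul_ne_top ENNReal.ofReal_ne_top (ENNReal.natCast_ne_top _)
  suffices (G m : ℝ≥0∞) / a ≤ filterThreshold A h e α m by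
    rwa [ENNReal.div_le_iff ha0 hatop, mul_comm] at this
  refine le_sInf ?_
  rintro _ ⟨t, ht, rfl⟩
  have htm0 : t m ≠ 0 := (zero_lt_one.trans_le (ht.1 m)).ne'
  have hfdp := ht.2 m
  rw [FDPhat, ENNReal.div_le_iff (by simp) (ENNReal.natCast_ne_top _)] at hfdp
  have hsub : selGrp A (sel h e t) m ⊆ selGrp A (output A h e α) m :=
    selGrp_mono A (sel_antitone h e (filterThreshold_le A h e ht)) m
  have hGt : (G m : ℝ≥0∞) / t m ≤ a :=
    hfdp.trans (mul_le_mul_right (by gcongr) _)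
  rw [ENNReal.div_le_iff_le_mul (Or.inl htm0) (Or.inr ha0)] at hGt
  rwa [ENNReal.div_le_iff ha0 hatop, mul_comm]

theorem FDP_output_le
    (hdisj : ∀ m, ∀ g₁ g₂ : Fin (G m), g₁ ≠ g₂ → Disjoint (A m g₁) (A m g₂))
    (hmem : ∀ m j, j ∈ A m (h m j)) (H0 : Finset (Fin N)) {α : Fin M → ℝ} {m : Fin M}
    (hα : 0 < α m) :
    FDP A H0 (output A h e α) m ≤
      ENNReal.ofReal (α m) / G m * ∑ g ∈ nullGrp A H0 m, e m g := by
  set th := filterThreshold A h e α m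
  set k := ((selGrp A (output A h e α) m ∩ nullGrp A H0 m).card : ℝ≥0∞)
  set D := ((max (selGrp A (output A h e α) m).card 1 : ℕ) : ℝ≥0∞)
  set E := ∑ g ∈ nullGrp A H0 m, e m g
  have hkth : k * th ≤ E :=
    calc k * th = ∑ _g ∈ selGrp A (output A h e α) m ∩ nullGrp A H0 m, th := by
          rw [Finset.sum_const, nsmul_eq_mul]
      _ ≤ ∑ g ∈ selGrp A (output A h e α) m ∩ nullGrp A H0 m, e m g :=
          Finset.sum_le_sum fun g hg =>
            le_of_mem_selGrp_sel A h e hdisj hmem (Finset.mem_inter.1 hg).1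
      _ ≤ E := Finset.sum_le_sum_of_subset Finset.inter_subset_right
  rcases (G m).eq_zero_or_pos with hG | hG
  · have hk : (selGrp A (output A h e α) m ∩ nullGrp A H0 m).card = 0 := by
      simpa [hG] using Finset.card_le_univ (selGrp A (output A h e α) m ∩ nullGrp A H0 m)
    simp [FDP, hk]
  have hG0 : (G m : ℝ≥0∞) ≠ 0 := by simpa using hG.ne'
  have hGtop : (G m : ℝ≥0∞) ≠ ⊤ := ENNReal.natCast_ne_top _
  rw [FDP, ENNReal.div_le_iff (by simp) (ENNReal.natCast_ne_top _),
    ← ENNReal.mul_le_mul_iff_left hG0 hGtop]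
  calc k * G m ≤ k * (ENNReal.ofReal (α m) * D * th) :=
        mul_le_mul_right (natCast_le_mul_filterThreshold A h e hα) _
    _ = ENNReal.ofReal (α m) * D * (k * th) := by ring
    _ ≤ ENNReal.ofReal (α m) * D * E := mul_le_mul_right hkth _
    _ = ENNReal.ofReal (α m) / G m * E * D * G m := by
        rw [show ENNReal.ofReal (α m) / G m * E * D * G m =
          ENNReal.ofReal (α m) / G m * G m * (D * E) by ring,
          ENNReal.div_mul_cancel hG0 hGtop, mul_assoc]

end EFilter

lemma exists_rat_btwn_of_finset {s : Finset ℝ} {t : ℝ} (ht : 0 < t) :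
    ∃ q : ℚ, 0 < q ∧ (q : ℝ) < t ∧ ∀ x ∈ s, x < t → x < q := by
  set B := insert 0 (s.filter (· < t))
  have hB : B.Nonempty := Finset.insert_nonempty _ _
  have hBt : B.max' hB < t := by
    rw [Finset.max'_lt_iff]
    simp [B, ht]
  obtain ⟨q, hq, hqt⟩ := exists_rat_btwn hBt
  refine ⟨q, ?_, hqt, fun x hx hxt => (B.le_max' x ?_).trans_lt hq⟩
  · exact_mod_cast ((B.le_max' 0 (Finset.mem_insert_self _ _)).trans_lt hq)
  · exact Finset.mem_insert_of_mem (Finset.mem_filter.2 ⟨hx, hxt⟩)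

section Knockoff

variable {ι : Type*}

noncomputable def knockoffRatio (F : Finset ι) (T : ι → ℝ) (t : ℝ) : ℝ :=
  ((F.filter fun g => t ≤ T g).card : ℝ) / (1 + ((F.filter fun g => T g ≤ -t).card : ℝ))

lemma knockoffRatio_nonneg (F : Finset ι) (T : ι → ℝ) (t : ℝ) : 0 ≤ knockoffRatio F T t := by
  unfold knockoffRatio; positivity

lemma knockoffRatio_le_card (F : Finset ι) (T : ι → ℝ) (t : ℝ) :
    knockoffRatio F T t ≤ F.card :=
  (div_le_self (by positivity) (by simp)).trans (by exact_mod_cast Finset.card_filter_le _ _)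

/-- The counts are constant between consecutive values of `|T|`, so the supremum over `t > 0`
is already approached along positive rationals. -/
lemma exists_rat_knockoffRatio_ge (F : Finset ι) (T : ι → ℝ) {t : ℝ} (ht : 0 < t) :
    ∃ q : ℚ, 0 < q ∧ knockoffRatio F T t ≤ knockoffRatio F T q := by
  obtain ⟨q, hq, hqt, hgap⟩ := exists_rat_btwn_of_finset (s := F.image fun g => -T g) ht
  refine ⟨q, hq, div_le_div₀ (by positivity) ?_ (by positivity) ?_⟩
  · exact_mod_cast Finset.card_le_card
      (Finset.monotone_filter_right _ fun g _ hg => hqt.le.trans hg)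
  · have hcard : (F.filter fun g => T g ≤ -q).card ≤ (F.filter fun g => T g ≤ -t).card := by
      refine Finset.card_le_card (Finset.monotone_filter_right _ fun g hg hgq => ?_)
      by_contra hgt
      have := hgap (-T g) (Finset.mem_image_of_mem _ hg) (by linarith)
      linarith
    gcongr

noncomputable def knockoffSup (F : Finset ι) (T : ι → ℝ) : ℝ≥0∞ :=
  ⨆ q : {q : ℚ // 0 < q}, ENNReal.ofReal (knockoffRatio F T q)

lemma ofReal_knockoffRatio_le_knockoffSup (F : Finset ι) (T : ι → ℝ) {t : ℝ} (ht : 0 < t) :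
    ENNReal.ofReal (knockoffRatio F T t) ≤ knockoffSup F T := by
  obtain ⟨q, hq, hle⟩ := exists_rat_knockoffRatio_ge F T ht
  exact (ENNReal.ofReal_le_ofReal hle).trans
    (le_iSup (fun q : {q : ℚ // 0 < q} => ENNReal.ofReal (knockoffRatio F T q)) ⟨q, hq⟩)

lemma knockoffSup_le (F : Finset ι) (T : ι → ℝ) :
    knockoffSup F T ≤ ENNReal.ofReal (⨆ t : Set.Ioi (0 : ℝ), knockoffRatio F T t) := by
  have hbdd : BddAbove (Set.range fun t : Set.Ioi (0 : ℝ) => knockoffRatio F T t) :=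
    ⟨F.card, Set.forall_mem_range.2 fun t => knockoffRatio_le_card F T t⟩
  refine iSup_le fun q => ENNReal.ofReal_le_ofReal ?_
  exact le_ciSup hbdd (⟨q, Set.mem_Ioi.2 (Rat.cast_pos.2 q.2)⟩ : Set.Ioi (0 : ℝ))

lemma measurable_card_filter_le {Ω : Type*} [MeasurableSpace Ω] (F : Finset ι)
    {f g : Ω → ι → ℝ} (hf : ∀ i, Measurable fun ω => f ω i) (hg : ∀ i, Measurable fun ω => g ω i) :
    Measurable fun ω => ((F.filter fun i => f ω i ≤ g ω i).card : ℝ) := by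
  simp_rw [← Finset.sum_boole]
  exact Finset.measurable_sum _ fun i _ =>
    Measurable.ite (measurableSet_le (hf i) (hg i)) measurable_const measurable_const

lemma measurable_knockoffSup {Ω : Type*} [MeasurableSpace Ω] (F : Finset ι) {T : Ω → ι → ℝ}
    (hT : ∀ g, Measurable fun ω => T ω g) : Measurable fun ω => knockoffSup F (T ω) := by
  refine Measurable.iSup fun q => Measurable.ennreal_ofReal (Measurable.div ?_ ?_)
  · exact measurable_card_filter_le F (fun _ => measurable_const) hT
  · exact measurable_const.add (measurable_card_filter_le F hT fun _ => measurable_const)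

end Knockoff

section EValue

variable {G : ℕ}

noncomputable def knockoffEValue (c γ : ℝ) (T : Fin G → ℝ) (t : ℝ) (g : Fin G) : ℝ :=
  G * (if t ≤ T g then 1 else 0) /
    max (c * (1 + ((Finset.univ.filter fun g' => T g' ≤ -t).card : ℝ))) γ

variable {c : ℝ} (γ : ℝ)

lemma knockoffEValue_nonneg (hc : 0 < c) (T : Fin G → ℝ) (t : ℝ) (g : Fin G) :
    0 ≤ knockoffEValue c γ T t g := by
  unfold knockoffEValue
  have : 0 < max (c * (1 + ((Finset.univ.filter fun g' => T g' ≤ -t).card : ℝ))) γ :=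
    lt_max_of_lt_left (by positivity)
  positivity

lemma sum_knockoffEValue_le (hc : 0 < c) (T : Fin G → ℝ) (t : ℝ) (F : Finset (Fin G)) :
    ∑ g ∈ F, knockoffEValue c γ T t g ≤ G / c * knockoffRatio F T t := by
  simp only [knockoffEValue, knockoffRatio, ← Finset.sum_div, ← Finset.mul_sum, Finset.sum_boole,
    div_mul_div_comm]
  refine div_le_div_of_nonneg_left (by positivity) (by positivity) (le_max_of_le_left ?_)
  gcongr
  exact Finset.subset_univ F

lemma sum_ofReal_weighted_knockoffEValue_le (hc : 0 < c) {R : ℕ} {w : Fin R → ℝ}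
    (hw : ∀ r, 0 ≤ w r) (T : Fin R → Fin G → ℝ) {t : Fin R → ℝ} (ht : ∀ r, 0 < t r)
    (F : Finset (Fin G)) :
    ∑ g ∈ F, ENNReal.ofReal (∑ r, w r * knockoffEValue c γ (T r) (t r) g) ≤
      G * ∑ r, ENNReal.ofReal (w r / c) * knockoffSup F (T r) := by
  have hwc : ∀ r, 0 ≤ w r / c := fun r => div_nonneg (hw r) hc.le
  calc ∑ g ∈ F, ENNReal.ofReal (∑ r, w r * knockoffEValue c γ (T r) (t r) g)
      = ENNReal.ofReal (∑ r, w r * ∑ g ∈ F, knockoffEValue c γ (T r) (t r) g) := by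
        rw [← ENNReal.ofReal_sum_of_nonneg fun g _ => Finset.sum_nonneg fun r _ =>
          mul_nonneg (hw r) (knockoffEValue_nonneg γ hc _ _ _), Finset.sum_comm]
        simp_rw [Finset.mul_sum]
    _ ≤ ENNReal.ofReal (G * ∑ r, w r / c * knockoffRatio F (T r) (t r)) := by
        refine ENNReal.ofReal_le_ofReal ?_
        rw [Finset.mul_sum]
        refine Finset.sum_le_sum fun r _ => ?_
        calc w r * ∑ g ∈ F, knockoffEValue c γ (T r) (t r) g
            ≤ w r * (G / c * knockoffRatio F (T r) (t r)) :=
              mul_le_mul_of_nonneg_left (sum_knockoffEValue_le γ hc _ _ F) (hw r)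
          _ = G * (w r / c * knockoffRatio F (T r) (t r)) := by ring
    _ = G * ∑ r, ENNReal.ofReal (w r / c) * ENNReal.ofReal (knockoffRatio F (T r) (t r)) := by
        rw [ENNReal.ofReal_mul (Nat.cast_nonneg _), ENNReal.ofReal_natCast,
          ENNReal.ofReal_sum_of_nonneg fun r _ =>
            mul_nonneg (hwc r) (knockoffRatio_nonneg _ _ _)]
        simp_rw [ENNReal.ofReal_mul (hwc _)]
    _ ≤ G * ∑ r, ENNReal.ofReal (w r / c) * knockoffSup F (T r) := by
        gcongr with r
        exact ofReal_knockoffRatio_le_knockoffSup F (T r) (ht r)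

end EValue

theorem stmt19_general {N M : ℕ} {G : Fin M → ℕ}
    (A : (m : Fin M) → Fin (G m) → Finset (Fin N))
    (h : (m : Fin M) → Fin N → Fin (G m))
    (hdisj : ∀ m, ∀ g₁ g₂ : Fin (G m), g₁ ≠ g₂ → Disjoint (A m g₁) (A m g₂))
    (hmem : ∀ m j, j ∈ A m (h m j))
    (H0 : Finset (Fin N))
    {Ω : Type*} [MeasurableSpace Ω] (P : Measure Ω)
    (c : ℝ) (hc : 0 < c) (ckn : ℝ)
    (γ α : Fin M → ℝ)
    (hα : ∀ m, α m ∈ Set.Ioo (0 : ℝ) 1)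
    (R : ℕ)
    (T : Ω → (m : Fin M) → Fin R → Fin (G m) → ℝ)
    (hmeasT : ∀ m (r : Fin R) g, Measurable fun ω => T ω m r g)
    (ttil : Ω → Fin M → Fin R → ℝ) (httil : ∀ ω m r, 0 < ttil ω m r)
    -- the knockoff supremum bound
    (hkn : ∀ m (r : Fin R), ∫⁻ ω, ENNReal.ofReal
        (⨆ t : Set.Ioi (0 : ℝ),
          (((nullGrp A H0 m).filter fun g => (t : ℝ) ≤ T ω m r g).card : ℝ) /
            (1 + (((nullGrp A H0 m).filter fun g => T ω m r g ≤ -(t : ℝ)).card : ℝ))) ∂P ≤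
      ENNReal.ofReal ckn)
    (w : Fin M → Fin R → ℝ) (hw : ∀ m r, 0 ≤ w m r) (hw1 : ∀ m, ∑ r, w m r = 1) :
    ∀ m, (∫⁻ ω, FDP A H0
        (output A h (fun m' g => ENNReal.ofReal (∑ r, w m' r *
          ((G m' : ℝ) * (if ttil ω m' r ≤ T ω m' r g then 1 else 0) /
            max (c * (1 + ((Finset.univ.filter fun g' : Fin (G m') =>
              T ω m' r g' ≤ -(ttil ω m' r)).card : ℝ))) (γ m')))) α)
        m ∂P) ≤ ENNReal.ofReal (ckn / c * α m) := by
  intro m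
  set F := nullGrp A H0 m
  have hmeas : ∀ r, Measurable fun ω => knockoffSup F (T ω m r) := fun r =>
    measurable_knockoffSup F (hmeasT m r)
  calc ∫⁻ ω, FDP A H0 (output A h _ α) m ∂P
      ≤ ∫⁻ ω, ENNReal.ofReal (α m) *
          ∑ r, ENNReal.ofReal (w m r / c) * knockoffSup F (T ω m r) ∂P := lintegral_mono fun ω =>
        (FDP_output_le A h _ hdisj hmem H0 (hα m).1).trans <|
          (mul_le_mul_right (sum_ofReal_weighted_knockoffEValue_le (γ m) hc (hw m)
            (T ω m) (httil ω m) F) _).trans <| by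
          rw [← mul_assoc, mul_comm _ (G m : ℝ≥0∞)]
          exact mul_le_mul_left ENNReal.mul_div_le _
    _ = ENNReal.ofReal (α m) * ∑ r, ENNReal.ofReal (w m r / c) *
          ∫⁻ ω, knockoffSup F (T ω m r) ∂P := by
        rw [lintegral_const_mul' _ _ ENNReal.ofReal_ne_top,
          lintegral_finsetSum _ fun r _ => (hmeas r).const_mul _]
        simp_rw [lintegral_const_mul' _ _ ENNReal.ofReal_ne_top]
    _ ≤ ENNReal.ofReal (α m) * ∑ r, ENNReal.ofReal (w m r / c) * ENNReal.ofReal ckn := by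
        gcongr with r
        exact (lintegral_mono fun ω => knockoffSup_le F (T ω m r)).trans (hkn m r)
    _ = ENNReal.ofReal (ckn / c * α m) := by
        rw [← Finset.sum_mul, ← ENNReal.ofReal_sum_of_nonneg fun r _ => div_nonneg (hw m r) hc.le,
          ← Finset.sum_div, hw1 m, ← ENNReal.ofReal_mul (by positivity),
          ← ENNReal.ofReal_mul (hα m).1.le]
        ring_nf

theorem stmt19 {N M : ℕ} (hN : 1 ≤ N) (hM : 1 ≤ M) {G : Fin M → ℕ}
    (A : (m : Fin M) → Fin (G m) → Finset (Fin N))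
    (h : (m : Fin M) → Fin N → Fin (G m))
    (hne : ∀ m g, (A m g).Nonempty)
    (hdisj : ∀ m, ∀ g₁ g₂ : Fin (G m), g₁ ≠ g₂ → Disjoint (A m g₁) (A m g₂))
    (hmem : ∀ m j, j ∈ A m (h m j))
    (H0 : Finset (Fin N))
    {Ω : Type*} [MeasurableSpace Ω] (P : Measure Ω) [IsProbabilityMeasure P]
    (c : ℝ) (hc : 0 < c) (ckn : ℝ) (hckn : 0 < ckn)
    (γ α : Fin M → ℝ)
    (hγ : ∀ m, γ m ∈ Set.Ioo (0 : ℝ) 1) (hα : ∀ m, α m ∈ Set.Ioo (0 : ℝ) 1)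
    (R : ℕ) (hR : 1 ≤ R)
    (T : Ω → (m : Fin M) → Fin R → Fin (G m) → ℝ)
    (hmeasT : ∀ m (r : Fin R) g, Measurable fun ω => T ω m r g)
    (ttil : Ω → Fin M → Fin R → ℝ) (httil : ∀ ω m r, 0 < ttil ω m r)
    (hmeasttil : ∀ m r, Measurable fun ω => ttil ω m r)
    -- the knockoff supremum bound
    (hkn : ∀ m (r : Fin R), ∫⁻ ω, ENNReal.ofReal
        (⨆ t : Set.Ioi (0 : ℝ),
          (((nullGrp A H0 m).filter fun g => (t : ℝ) ≤ T ω m r g).card : ℝ) /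
            (1 + (((nullGrp A H0 m).filter fun g => T ω m r g ≤ -(t : ℝ)).card : ℝ))) ∂P ≤
      ENNReal.ofReal ckn)
    (w : Fin M → Fin R → ℝ) (hw : ∀ m r, 0 ≤ w m r) (hw1 : ∀ m, ∑ r, w m r = 1) :
    ∀ m, (∫⁻ ω, FDP A H0
        (output A h (fun m' g => ENNReal.ofReal (∑ r, w m' r *
          ((G m' : ℝ) * (if ttil ω m' r ≤ T ω m' r g then 1 else 0) /
            max (c * (1 + ((Finset.univ.filter fun g' : Fin (G m') =>
              T ω m' r g' ≤ -(ttil ω m' r)).card : ℝ))) (γ m')))) α)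
        m ∂P) ≤ ENNReal.ofReal (ckn / c * α m) :=
  stmt19_general A h hdisj hmem H0 P c hc ckn γ α hα R T hmeasT ttil httil hkn w hw hw1

end MultilayerEFilter
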